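/- arXiv:1010.3386 — 4 statements merged into one kernel-verified Lean document; each statement's English description precedes it below -/
import Mathlib

section
/- Let T be a bounded operator on a complex Hilbert space H. If the adjoint T* has an eigenvalue λ with |λ| < 1, then T is not a J-class operator. -/
open Filter Topology

/-- The J-set of a vector `x` under a bounded operator `T`. -/
def JSet {X : Type*} [NormedAddCommGroup X] [NormedSpace ℂ X]
    (T : X →L[ℂ] X) (x : X) : Set X :=
  {y | ∃ k : ℕ → ℕ, StrictMono k ∧ (∀ n, 0 < k n) ∧ ∃ u : ℕ → X,
    Tendsto u atTop (𝓝 x) ∧ Tendsto (fun n => (T ^ k n) (u n)) atTop (𝓝 y)}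

/-- `T` is a J-class operator if `J(x) = X` for some nonzero `x`. -/
def IsJClass {X : Type*} [NormedAddCommGroup X] [NormedSpace ℂ X]
    (T : X →L[ℂ] X) : Prop :=
  ∃ x : X, x ≠ 0 ∧ JSet T x = Set.univ

/-! If `T* v = λ v`, then `⟪v, T^k u⟫ = conj λ ^ k ⟪v, u⟫`. Along a sequence `uₙ → x` and
exponents `kₙ → ∞` this tends to `0` when `|λ| < 1`, so every J-set of `T` lies in the
hyperplane `v⊥`; in particular it does not contain `v`. -/

namespace ContinuousLinearMap

theorem pow_apply_of_apply_eq_smul {R M : Type*} [CommSemiring R] [TopologicalSpace M]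
    [AddCommMonoid M] [Module R M] {S : M →L[R] M} {a : R} {v : M} (hv : S v = a • v)
    (m : ℕ) : (S ^ m) v = a ^ m • v := by
  induction m with
  | zero => simp
  | succ m ih => rw [pow_succ', mul_apply_eq_comp, ih, map_smul, hv, smul_smul, pow_succ]

theorem inner_pow_apply_of_adjoint_apply_eq_smul {𝕜 E : Type*} [RCLike 𝕜] [NormedAddCommGroup E]
    [InnerProductSpace 𝕜 E] [CompleteSpace E] {T : E →L[𝕜] E} {a : 𝕜}
    {v : E} (hv : adjoint T v = a • v) (m : ℕ) (u : E) :
    inner 𝕜 v ((T ^ m) u) = (starRingEnd 𝕜) a ^ m * inner 𝕜 v u := by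
  rw [← adjoint_inner_left, ← star_eq_adjoint, star_pow, star_eq_adjoint,
    pow_apply_of_apply_eq_smul hv, inner_smul_left, map_pow]

end ContinuousLinearMap

theorem inner_eq_zero_of_mem_JSet {H : Type*} [NormedAddCommGroup H] [InnerProductSpace ℂ H]
    [CompleteSpace H] {T : H →L[ℂ] H} {lam : ℂ} (hlam : ‖lam‖ < 1) {v : H}
    (hv : ContinuousLinearMap.adjoint T v = lam • v) {x y : H} (hy : y ∈ JSet T x) :
    inner ℂ v y = 0 := by
  obtain ⟨k, hk, -, u, hu, hTu⟩ := hy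
  have hdecay : Tendsto (fun n => (starRingEnd ℂ) lam ^ k n) atTop (𝓝 0) :=
    (tendsto_pow_atTop_nhds_zero_of_norm_lt_one (by simpa using hlam)).comp hk.tendsto_atTop
  have hlim : Tendsto (fun n => inner ℂ v ((T ^ k n) (u n))) atTop (𝓝 0) := by
    simp_rw [ContinuousLinearMap.inner_pow_apply_of_adjoint_apply_eq_smul hv]
    simpa using hdecay.mul (tendsto_const_nhds.inner hu)
  exact tendsto_nhds_unique (tendsto_const_nhds.inner hTu) hlim

/-- If the adjoint of `T` has an eigenvalue of modulus `< 1`, then `T` is not J-class. -/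
theorem not_isJClass_of_adjoint_eigenvalue {H : Type*} [NormedAddCommGroup H]
    [InnerProductSpace ℂ H] [CompleteSpace H] (T : H →L[ℂ] H) (lam : ℂ)
    (hlam : ‖lam‖ < 1)
    (hev : ∃ v : H, v ≠ 0 ∧ ContinuousLinearMap.adjoint T v = lam • v) :
    ¬ IsJClass T := by
  rintro ⟨x, -, hJ⟩
  obtain ⟨v, hv0, hv⟩ := hev
  have hvv : inner ℂ v v = 0 := inner_eq_zero_of_mem_JSet hlam hv (hJ ▸ Set.mem_univ v)
  exact hv0 (inner_self_eq_zero.mp hvv)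
end

section
/- Let T be a bounded operator on a Hilbert space H, λ a complex number with |λ| < 1, and suppose P is the orthogonal projection onto a nonzero closed subspace M such that P T = λ̄ P (i.e., T has the form [[*, *],[0, λ̄ I]] with respect to H = M^⊥ ⊕ M). Then for every x ∈ H, every y ∈ J(x) satisfies P y = 0; in particular J(x) ≠ H. -/
open Filter Topology

/-! The component `P (T ^ k u)` equals `c ^ k • P u`; along any `u n → x` and any `k n → ∞`
this tends to `0` because `‖c‖ < 1` and `P (u n)` stays bounded, so `P` kills every point of
`J(x)`. A nonzero vector of `M` is fixed by the projection, hence never lies in `J(x)`. -/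

theorem ContinuousLinearMap.comp_pow_eq_smul_of_comp_eq_smul {R E F : Type*} [CommSemiring R]
    [TopologicalSpace E] [AddCommMonoid E] [Module R E] [TopologicalSpace F] [AddCommMonoid F]
    [Module R F] [ContinuousConstSMul R F] {P : E →L[R] F} {T : E →L[R] E} {c : R}
    (h : P ∘L T = c • P) (m : ℕ) : P ∘L (T ^ m) = c ^ m • P := by
  induction m with
  | zero => ext; simp
  | succ m ih =>
    calc P ∘L (T ^ (m + 1)) = (P ∘L T ^ m) ∘L T := by rw [pow_succ]; rfl
      _ = c ^ m • (P ∘L T) := by rw [ih, ContinuousLinearMap.smul_comp]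
      _ = c ^ (m + 1) • P := by rw [h, smul_smul, pow_succ]

theorem map_eq_zero_of_mem_jSet {X Y : Type*} [NormedAddCommGroup X] [NormedSpace ℂ X]
    [NormedAddCommGroup Y] [NormedSpace ℂ Y] {T : X →L[ℂ] X} {P : X →L[ℂ] Y} {c : ℂ}
    (hc : ‖c‖ < 1) (hPT : P ∘L T = c • P) {x y : X} (hy : y ∈ JSet T x) : P y = 0 := by
  obtain ⟨k, hk, -, u, hu, hTu⟩ := hy
  have hPk : ∀ n, P ((T ^ k n) (u n)) = c ^ k n • P (u n) := fun n => by
    rw [← ContinuousLinearMap.comp_apply, P.comp_pow_eq_smul_of_comp_eq_smul hPT,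
      smul_apply]
  have hlim : Tendsto (fun n => c ^ k n • P (u n)) atTop (𝓝 ((0 : ℂ) • P x)) :=
    ((tendsto_pow_atTop_nhds_zero_of_norm_lt_one hc).comp hk.tendsto_atTop).smul
      ((P.continuous.tendsto x).comp hu)
  rw [zero_smul, ← funext hPk] at hlim
  exact tendsto_nhds_unique ((P.continuous.tendsto y).comp hTu) hlim

theorem jSet_ne_univ_of_map_ne_zero {X Y : Type*} [NormedAddCommGroup X] [NormedSpace ℂ X]
    [NormedAddCommGroup Y] [NormedSpace ℂ Y] {T : X →L[ℂ] X} {P : X →L[ℂ] Y} {c : ℂ}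
    (hc : ‖c‖ < 1) (hPT : P ∘L T = c • P) {v : X} (hv : P v ≠ 0) (x : X) :
    JSet T x ≠ Set.univ := fun hx =>
  hv (map_eq_zero_of_mem_jSet hc hPT (hx ▸ Set.mem_univ v))

theorem jset_proj_eq_zero_general {H : Type*} [NormedAddCommGroup H]
    [InnerProductSpace ℂ H] (T : H →L[ℂ] H)
    (M : Submodule ℂ H) [CompleteSpace M] (hM : M ≠ ⊥) (lam : ℂ) (hlam : ‖lam‖ < 1)
    (P : H →L[ℂ] H)
    (hP : P = M.subtypeL.comp (M.orthogonalProjection))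
    (hPT : P.comp T = (starRingEnd ℂ lam) • P) :
    (∀ x : H, ∀ y ∈ JSet T x, P y = 0) ∧ ∀ x : H, JSet T x ≠ Set.univ := by
  have hc : ‖starRingEnd ℂ lam‖ < 1 := by rwa [RCLike.norm_conj]
  obtain ⟨v, hvM, hv0⟩ := Submodule.exists_mem_ne_zero_of_ne_bot hM
  have hPv : P v = v := by
    rw [hP]
    exact M.starProjection_eq_self_iff.mpr hvM
  exact ⟨fun x _ => map_eq_zero_of_mem_jSet hc hPT,
    jSet_ne_univ_of_map_ne_zero hc hPT (hPv.symm ▸ hv0)⟩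

/-- If `P` is the orthogonal projection onto a nonzero closed subspace `M` with
`P T = conj lam • P` and `|lam| < 1`, then every `y ∈ J(x)` satisfies `P y = 0`;
in particular `J(x) ≠ H`. -/
theorem jset_proj_eq_zero {H : Type*} [NormedAddCommGroup H]
    [InnerProductSpace ℂ H] [CompleteSpace H] (T : H →L[ℂ] H)
    (M : Submodule ℂ H) [CompleteSpace M] (hM : M ≠ ⊥) (lam : ℂ) (hlam : ‖lam‖ < 1)
    (P : H →L[ℂ] H)
    (hP : P = M.subtypeL.comp (M.orthogonalProjection))
    (hPT : P.comp T = (starRingEnd ℂ lam) • P) :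
    (∀ x : H, ∀ y ∈ JSet T x, P y = 0) ∧ ∀ x : H, JSet T x ≠ Set.univ :=
  jset_proj_eq_zero_general T M hM lam hlam P hP hPT
end

section
/- No linear map A : ℂⁿ → ℂⁿ (n a positive integer) is a J-class operator. -/
/-!
If `J(x)` is the whole space, then every dual eigenvector `φ ∘ A = μ φ` with `|μ| ≤ 1` vanishes,
since `|φ (A^k u)| ≤ |φ u|` bounds `|φ|` on `J(x)` by `|φ x|`. In finite dimension every point of
the spectrum carries a dual eigenvector, so the spectrum of `A` lies outside the closed unit disc.
Then `A` is invertible and, by Gelfand's formula, `A⁻ᵏ → 0`; applied to `0 ∈ J(x)`, i.e.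
`A^{kₙ} xₙ → 0`, this gives `xₙ = A^{-kₙ} A^{kₙ} xₙ → 0`, so `x = 0`.
-/

open Filter Topology

section BanachAlgebra

variable {A : Type*} [NormedRing A] [NormedAlgebra ℂ A] [CompleteSpace A]

theorem tendsto_pow_nhds_zero_of_spectralRadius_lt_one {a : A} (ha : spectralRadius ℂ a < 1) :
    Tendsto (fun n => a ^ n) atTop (𝓝 0) := by
  obtain ⟨r, hρr, hr1⟩ := ENNReal.lt_iff_exists_nnreal_btwn.mp ha
  have hev : ∀ᶠ n : ℕ in atTop, ‖a ^ n‖₊ ≤ r ^ n := by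
    filter_upwards [(spectrum.pow_nnnorm_pow_one_div_tendsto_nhds_spectralRadius a)
      |>.eventually_lt_const hρr, eventually_ne_atTop 0] with n hn hn0
    rw [one_div, ← ENNReal.coe_rpow_of_nonneg _ (by positivity), ENNReal.coe_lt_coe] at hn
    calc ‖a ^ n‖₊ = (‖a ^ n‖₊ ^ (n⁻¹ : ℝ)) ^ n := (NNReal.rpow_inv_natCast_pow _ hn0).symm
      _ ≤ r ^ n := pow_le_pow_left₀ zero_le hn.le n
  refine squeeze_zero_norm' ?_ (tendsto_pow_atTop_nhds_zero_of_lt_one r.coe_nonneg (mod_cast hr1))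
  filter_upwards [hev] with n hn
  exact_mod_cast hn

theorem Units.spectralRadius_inv_lt_one [Nontrivial A] (a : Aˣ)
    (ha : ∀ μ ∈ spectrum ℂ (a : A), 1 < ‖μ‖) : spectralRadius ℂ (↑a⁻¹ : A) < 1 := by
  rw [← ENNReal.coe_one]
  refine spectrum.spectralRadius_lt_of_forall_lt _ fun μ hμ => ?_
  have hμ0 : μ ≠ 0 := spectrum.ne_zero_of_mem_of_unit hμ
  have hμinv : μ⁻¹ ∈ spectrum ℂ (a : A) :=
    spectrum.inv_mem_iff (r := Units.mk0 μ⁻¹ (inv_ne_zero hμ0)).mpr (by simpa using hμ)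
  have := ha _ hμinv
  rw [norm_inv, one_lt_inv₀ (norm_pos_iff.mpr hμ0)] at this
  exact_mod_cast this

end BanachAlgebra

theorem exists_dual_eigenvector_of_mem_spectrum {𝕜 E : Type*} [NontriviallyNormedField 𝕜]
    [CompleteSpace 𝕜] [NormedAddCommGroup E] [NormedSpace 𝕜 E] [FiniteDimensional 𝕜 E]
    {T : E →L[𝕜] E} {μ : 𝕜} (hμ : μ ∈ spectrum 𝕜 T) :
    ∃ φ : E →L[𝕜] 𝕜, φ ≠ 0 ∧ ∀ v, φ (T v) = μ * φ v := by
  have : CompleteSpace E := FiniteDimensional.complete 𝕜 E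
  rw [ContinuousLinearMap.spectrum_eq, spectrum.mem_iff, LinearMap.isUnit_iff_range_eq_top] at hμ
  obtain ⟨ψ, hψ0, hψ⟩ := Submodule.exists_le_ker_of_lt_top _ (lt_top_iff_ne_top.mpr hμ)
  refine ⟨LinearMap.toContinuousLinearMap ψ, by simpa using hψ0, fun v => ?_⟩
  have := hψ (LinearMap.mem_range_self _ v)
  simp only [LinearMap.mem_ker, LinearMap.sub_apply, Module.algebraMap_end_apply,
    ContinuousLinearMap.coe_coe, map_sub, map_smul, smul_eq_mul, sub_eq_zero] at this
  simpa using this.symm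

section JSet

variable {X : Type*} [NormedAddCommGroup X] [NormedSpace ℂ X] {T : X →L[ℂ] X} {x : X}

theorem norm_apply_le_of_mem_JSet {φ : X →L[ℂ] ℂ} {μ : ℂ} (hφ : ∀ v, φ (T v) = μ * φ v)
    (hμ : ‖μ‖ ≤ 1) {y : X} (hy : y ∈ JSet T x) : ‖φ y‖ ≤ ‖φ x‖ := by
  obtain ⟨k, -, -, u, hu, hTu⟩ := hy
  have hpow : ∀ m v, φ ((T ^ m) v) = μ ^ m * φ v := by
    intro m
    induction m with
    | zero => simp
    | succ m ih =>
      intro v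
      rw [pow_succ, mul_apply_eq_comp, ih, hφ, pow_succ, mul_assoc]
  refine le_of_tendsto_of_tendsto' ((φ.continuous.tendsto y).comp hTu).norm
    ((φ.continuous.tendsto x).comp hu).norm fun i => ?_
  simp only [Function.comp_apply, hpow, norm_mul, norm_pow]
  exact mul_le_of_le_one_left (norm_nonneg _) (pow_le_one₀ (norm_nonneg _) hμ)

theorem eq_zero_of_JSet_eq_univ {φ : X →L[ℂ] ℂ} {μ : ℂ} (hφ : ∀ v, φ (T v) = μ * φ v)
    (hμ : ‖μ‖ ≤ 1) (hJ : JSet T x = Set.univ) : φ = 0 := by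
  by_contra hne
  obtain ⟨v, hv⟩ : ∃ v, φ v ≠ 0 := by
    by_contra! h
    exact hne (ContinuousLinearMap.ext h)
  have := norm_apply_le_of_mem_JSet hφ hμ (hJ ▸ Set.mem_univ ((((‖φ x‖ + 1 : ℝ) : ℂ) / φ v) • v))
  rw [map_smul, smul_eq_mul, div_mul_cancel₀ _ hv, Complex.norm_real,
    Real.norm_of_nonneg (by positivity)] at this
  linarith

theorem one_lt_norm_of_mem_spectrum_of_JSet_eq_univ [FiniteDimensional ℂ X]
    (hJ : JSet T x = Set.univ) {μ : ℂ} (hμ : μ ∈ spectrum ℂ T) : 1 < ‖μ‖ := by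
  obtain ⟨φ, hφ0, hφ⟩ := exists_dual_eigenvector_of_mem_spectrum hμ
  by_contra! hle
  exact hφ0 (eq_zero_of_JSet_eq_univ hφ hle hJ)

theorem eq_zero_of_zero_mem_JSet {S : X →L[ℂ] X} (hST : S * T = 1)
    (hS : Tendsto (fun n => S ^ n) atTop (𝓝 0)) (h0 : (0 : X) ∈ JSet T x) : x = 0 := by
  obtain ⟨k, hk, -, u, hu, hTu⟩ := h0
  have hSTu : Tendsto (fun i => (S ^ k i) ((T ^ k i) (u i))) atTop (𝓝 0) := by
    exact (isBoundedBilinearMap_apply.continuous.tendsto ((0 : X →L[ℂ] X), (0 : X))).comp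
      ((hS.comp hk.tendsto_atTop).prodMk_nhds hTu)
  have hSTk : ∀ i, (S ^ k i) ((T ^ k i) (u i)) = u i := fun i => by
    rw [← mul_apply_eq_comp, pow_mul_pow_eq_one _ hST, one_apply_eq_self]
  exact tendsto_nhds_unique hu (hSTu.congr hSTk)

end JSet

theorem not_isJClass_finiteDimensional_general (n : ℕ)
    (A : (Fin n → ℂ) →L[ℂ] (Fin n → ℂ)) :
    ¬ IsJClass A := by
  rintro ⟨x, hx, hJ⟩
  have : Nontrivial (Fin n → ℂ) := nontrivial_of_ne x 0 hx
  have hσ : ∀ μ ∈ spectrum ℂ A, 1 < ‖μ‖ := fun μ =>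
    one_lt_norm_of_mem_spectrum_of_JSet_eq_univ hJ
  obtain ⟨U, rfl⟩ : IsUnit A :=
    (spectrum.zero_notMem_iff ℂ).mp fun h0 => (hσ 0 h0).not_ge (by simp)
  exact hx <| eq_zero_of_zero_mem_JSet U.inv_mul
    (tendsto_pow_nhds_zero_of_spectralRadius_lt_one (U.spectralRadius_inv_lt_one hσ))
    (hJ ▸ Set.mem_univ 0)

/-- No linear operator on `ℂⁿ` is a J-class operator. -/
theorem not_isJClass_finiteDimensional (n : ℕ) (hn : 0 < n)
    (A : (Fin n → ℂ) →L[ℂ] (Fin n → ℂ)) :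
    ¬ IsJClass A :=
  not_isJClass_finiteDimensional_general n A
end

section
/- Let T be a bounded operator on a Hilbert space H and λ ∈ ℂ with |λ| < 1 such that λ − T is semi-Fredholm with ind(λ − T) < 0 (so dim ker(T* − λ̄) > 0). Then T is not a J-class operator. -/
open Filter Topology

/-- If `|λ| < 1` and `λ − T` is semi-Fredholm with negative index (closed range
and `dim ker(λ − T) < dim ker(λ − T)*`), then `T` is not a J-class operator. -/
theorem not_isJClass_of_negative_index {H : Type*} [NormedAddCommGroup H]
    [InnerProductSpace ℂ H] [CompleteSpace H] (T : H →L[ℂ] H) (lam : ℂ)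
    (hlam : ‖lam‖ < 1)
    (hclosed : IsClosed (Set.range (lam • (1 : H →L[ℂ] H) - T)))
    (hind : Module.rank ℂ (LinearMap.ker ((lam • (1 : H →L[ℂ] H) - T : H →L[ℂ] H) : H →ₗ[ℂ] H)) <
      Module.rank ℂ
        (LinearMap.ker ((ContinuousLinearMap.adjoint (lam • (1 : H →L[ℂ] H) - T) : H →ₗ[ℂ] H)))) :
    ¬ IsJClass T := by
  classical
  -- get a nonzero eigenvector of the adjoint
  have hpos : 0 < Module.rank ℂ
      (LinearMap.ker ((ContinuousLinearMap.adjoint (lam • (1 : H →L[ℂ] H) - T) : H →ₗ[ℂ] H))) :=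
    lt_of_le_of_lt zero_le hind
  obtain ⟨⟨g, hgker⟩, hgne⟩ := rank_pos_iff_exists_ne_zero.mp hpos
  have hg0 : g ≠ 0 := fun h => hgne (Subtype.ext h)
  have hstar : ContinuousLinearMap.adjoint (lam • (1 : H →L[ℂ] H) - T) =
      (starRingEnd ℂ lam) • (1 : H →L[ℂ] H) - ContinuousLinearMap.adjoint T := by
    simp [← ContinuousLinearMap.star_eq_adjoint, star_sub, star_smul]
  have hgeq : ContinuousLinearMap.adjoint T g = (starRingEnd ℂ lam) • g := by
    have h := LinearMap.mem_ker.mp hgker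
    rw [hstar] at h
    have h2 : (starRingEnd ℂ lam) • g - ContinuousLinearMap.adjoint T g = 0 := by
      simpa using h
    linear_combination (norm := module) -h2
  have hpow : ∀ k : ℕ, (ContinuousLinearMap.adjoint T ^ k) g = (starRingEnd ℂ lam) ^ k • g := by
    intro k
    induction k with
    | zero => simp
    | succ n ih =>
      rw [pow_succ, ContinuousLinearMap.mul_apply, hgeq, map_smul, ih, smul_smul, ← pow_succ']
  rintro ⟨x, hx, hJ⟩
  have hgmem : g ∈ JSet T x := hJ ▸ Set.mem_univ g
  obtain ⟨k, hk, hkpos, u, hu, huy⟩ := hgmem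
  -- inner products
  have key : ∀ n, inner ℂ ((T ^ k n) (u n)) g =
      (starRingEnd ℂ lam) ^ k n * (inner ℂ (u n) g : ℂ) := by
    intro n
    rw [← ContinuousLinearMap.adjoint_inner_right]
    have : ContinuousLinearMap.adjoint (T ^ k n) = ContinuousLinearMap.adjoint T ^ k n := by
      simp [← ContinuousLinearMap.star_eq_adjoint, star_pow]
    rw [this, hpow, inner_smul_right]
  have h1 : Tendsto (fun n => (inner ℂ ((T ^ k n) (u n)) g : ℂ)) atTop (𝓝 (inner ℂ g g)) :=
    huy.inner tendsto_const_nhds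
  have h2 : Tendsto (fun n => (inner ℂ ((T ^ k n) (u n)) g : ℂ)) atTop (𝓝 0) := by
    have hlc : Tendsto (fun n : ℕ => (starRingEnd ℂ lam) ^ n) atTop (𝓝 0) := by
      apply tendsto_pow_atTop_nhds_zero_of_norm_lt_one
      simpa using hlam
    have hkt : Tendsto k atTop atTop := hk.tendsto_atTop
    have := (hlc.comp hkt).mul (hu.inner (tendsto_const_nhds (x := g)))
    simp only [zero_mul] at this
    simpa only [key, Function.comp] using this
  have : (inner ℂ g g : ℂ) = 0 := tendsto_nhds_unique h1 h2
  exact hg0 (inner_self_eq_zero.mp this)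
end
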